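/- Mould composition is associative: for moulds M, N, P on a semigroup (A, ⋆), (M ∘ N) ∘ P = M ∘ (N ∘ P), where (M ∘ N)^a = Σ_{k=1}^{ℓ(a)} Σ_{a¹⋯a^k = a, aⁱ ≠ ∅} M^{‖a¹‖ ... ‖a^k‖} N^{a¹} ⋯ N^{a^k} and (M ∘ N)^∅ = M^∅. -/

import Mathlib

open Classical
/-- The `⋆`-norm `‖a‖⋆ = a₁ ⋆ ⋯ ⋆ a_r` of a word (with a junk value on the empty word). -/
def wnorm {A : Type*} [Semigroup A] [Inhabited A] : List A → A
  | [] => default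
  | x :: t => t.foldl (· * ·) x

/-- Mould composition, given by the closed formula: `(M ∘ N)^∅ = M^∅` and, for `a ≠ ∅`,
`(M ∘ N)^a = Σ Σ_{a¹⋯a^k = a, aⁱ ≠ ∅} M^{‖a¹‖…‖a^k‖} N^{a¹}⋯N^{a^k}`, decompositions of
`a` into nonempty consecutive blocks being indexed by compositions of `ℓ(a)`. -/
noncomputable def mouldComp {A K : Type*} [Semigroup A] [Inhabited A] [CommRing K]
    (M N : List A → K) (a : List A) : K :=
  if a = [] then M []
  else ∑ c : Composition a.length,
    M ((a.splitWrtComposition c).map wnorm) * ((a.splitWrtComposition c).map N).prod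

theorem wnorm_append {A : Type*} [Semigroup A] [Inhabited A] (u v : List A)
    (hu : u ≠ []) (hv : v ≠ []) : wnorm (u ++ v) = wnorm u * wnorm v := by
  obtain ⟨x, tu, rfl⟩ := List.exists_cons_of_ne_nil hu
  obtain ⟨y, tv, rfl⟩ := List.exists_cons_of_ne_nil hv
  show List.foldl (· * ·) x (tu ++ y :: tv) = _
  rw [List.foldl_append, List.foldl_cons]
  show List.foldl (· * ·) (_ * _) tv = _
  rw [List.foldl_assoc]; rfl

theorem wnorm_flatten {A : Type*} [Semigroup A] [Inhabited A] :
    ∀ (L : List (List A)), L ≠ [] → (∀ u ∈ L, u ≠ []) →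
      wnorm (L.map wnorm) = wnorm L.flatten
  | [], h, _ => absurd rfl h
  | [u], _, h => by simp [wnorm]
  | u :: v :: L, _, h => by
    have hu : u ≠ [] := h u (by simp)
    have hL : ∀ w ∈ v :: L, w ≠ [] := fun w hw => h w (by simp [hw])
    have hflat : (v :: L).flatten ≠ [] := by
      simp only [ne_eq, List.flatten_eq_nil_iff, not_forall]
      exact ⟨v, by simp, hL v (by simp)⟩
    have ih := wnorm_flatten (v :: L) (by simp) hL
    calc wnorm ((u :: v :: L).map wnorm)
        = wnorm ([wnorm u] ++ (v :: L).map wnorm) := rfl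
      _ = wnorm [wnorm u] * wnorm ((v :: L).map wnorm) :=
          wnorm_append _ _ (by simp) (by simp)
      _ = wnorm u * wnorm (v :: L).flatten := by rw [ih]; rfl
      _ = wnorm (u ++ (v :: L).flatten) := (wnorm_append _ _ hu hflat).symm
      _ = wnorm (u :: v :: L).flatten := by simp

theorem map_splitWrtCompositionAux {α β : Type*} (f : α → β) :
    ∀ (l : List α) (ns : List ℕ),
      (l.map f).splitWrtCompositionAux ns = (l.splitWrtCompositionAux ns).map (List.map f)
  | _, [] => rfl
  | l, n :: ns => by
    rw [List.splitWrtCompositionAux_cons, List.splitWrtCompositionAux_cons, List.map_cons,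
      ← List.map_drop, map_splitWrtCompositionAux f _ ns, List.map_take]

theorem splitAux_flatten {α : Type*} (L : List (List α)) (ns : List ℕ)
    (h : L.map List.length = ns) : L.flatten.splitWrtCompositionAux ns = L := by
  rw [List.eq_iff_flatten_eq]
  have hsum : ns.sum = L.flatten.length := by rw [← h, List.length_flatten]
  constructor
  · exact List.flatten_splitWrtCompositionAux hsum
  · rw [List.map_length_splitWrtCompositionAux (le_of_eq hsum), h]

/-- Reindexing a sum over compositions along an equality of the sizes, when the summand
only depends on the blocks. -/
theorem sum_comp_reindex {K : Type*} [AddCommMonoid K] {m m' : ℕ} (h : m = m')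
    (F : List ℕ → K) :
    ∑ c : Composition m, F c.blocks = ∑ c : Composition m', F c.blocks := by
  subst h; rfl

theorem mouldComp_expand {A K : Type*} [Semigroup A] [Inhabited A] [CommRing K]
    (M N : List A → K) (b : List A) (hb : b ≠ []) {m : ℕ} (hm : b.length = m) :
    mouldComp M N b = ∑ c : Composition m,
      M ((b.splitWrtCompositionAux c.blocks).map wnorm) *
        ((b.splitWrtCompositionAux c.blocks).map N).prod := by
  subst hm
  rw [mouldComp, if_neg hb]
  rfl

theorem prod_map_eq_prod_fin {α β : Type*} [CommMonoid β] (L : List α) (f : α → β)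
    {m : ℕ} (h : L.length = m) :
    (L.map f).prod = ∏ i : Fin m, f (L[(i : ℕ)]'(h ▸ i.2)) := by
  subst h
  rw [← Fin.prod_ofFn]
  congr 1
  apply List.ext_getElem <;> simp

theorem split_gather {α : Type*} (a : List α) (c : Composition a.length)
    (d : Composition c.length) :
    a.splitWrtComposition (c.gather d) =
      ((a.splitWrtComposition c).splitWrtCompositionAux d.blocks).map List.flatten := by
  have hS : ((a.splitWrtComposition c).map List.length) = c.blocks :=
    List.map_length_splitWrtComposition a c
  have hT : c.blocks.splitWrtCompositionAux d.blocks =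
      ((a.splitWrtComposition c).splitWrtCompositionAux d.blocks).map (List.map List.length) := by
    rw [← hS, map_splitWrtCompositionAux]
  have hflatT : ((a.splitWrtComposition c).splitWrtCompositionAux d.blocks).flatten
      = a.splitWrtComposition c :=
    List.flatten_splitWrtCompositionAux (by rw [d.blocks_sum, List.length_splitWrtComposition])
  rw [List.eq_iff_flatten_eq]
  constructor
  · rw [List.flatten_splitWrtComposition, ← List.flatten_flatten, hflatT,
      List.flatten_splitWrtComposition]
  · show _ = List.map _ _
    rw [List.map_map]
    have : (c.gather d).blocks = List.map List.sum (c.blocks.splitWrtCompositionAux d.blocks) :=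
      rfl
    rw [List.map_length_splitWrtComposition, this, hT, List.map_map]
    congr 1
    funext t
    simp [List.length_flatten]


/-- mould composition is associative. -/
theorem mouldComp_assoc {A K : Type*} [Semigroup A] [Inhabited A] [CommRing K]
    (M N P : List A → K) :
    mouldComp (mouldComp M N) P = mouldComp M (mouldComp N P) := by
  funext a
  by_cases ha : a = []
  · subst ha; simp [mouldComp]
  have hn : 0 < a.length := List.length_pos_iff.2 ha
  rw [mouldComp_expand _ _ a ha rfl, mouldComp_expand _ _ a ha rfl]
  -- Expand the inner `mouldComp M N` on the left.
  have expandL : ∀ c : Composition a.length,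
      mouldComp M N ((a.splitWrtComposition c).map wnorm) =
        ∑ d : Composition c.length,
          M ((((a.splitWrtComposition c).map wnorm).splitWrtCompositionAux d.blocks).map wnorm) *
            ((((a.splitWrtComposition c).map wnorm).splitWrtCompositionAux d.blocks).map N).prod := by
    intro c
    have hm : ((a.splitWrtComposition c).map wnorm).length = c.length := by
      simp [List.length_splitWrtComposition]
    have hb : (a.splitWrtComposition c).map wnorm ≠ [] := by
      intro h
      rw [h] at hm
      exact (c.length_pos_of_pos hn).ne' (by simpa using hm.symm)
    exact mouldComp_expand M N _ hb hm
  -- Expand the inner `mouldComp N P` on the right.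
  have expandR : ∀ c : Composition a.length,
      ((a.splitWrtComposition c).map (mouldComp N P)).prod =
        ∑ x : ∀ i : Fin c.length, Composition (c.blocksFun i),
          ∏ i : Fin c.length,
            (N (((((a.splitWrtComposition c)[(i : ℕ)]'(by
                rw [List.length_splitWrtComposition]; exact i.2)).splitWrtCompositionAux
                (x i).blocks).map wnorm)) *
              ((((a.splitWrtComposition c)[(i : ℕ)]'(by
                rw [List.length_splitWrtComposition]; exact i.2)).splitWrtCompositionAux
                (x i).blocks).map P).prod) := by
    intro c
    have key : ∀ i : Fin c.length,
        mouldComp N P ((a.splitWrtComposition c)[(i : ℕ)]'(by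
            rw [List.length_splitWrtComposition]; exact i.2)) =
          ∑ e : Composition (c.blocksFun i),
            (N (((((a.splitWrtComposition c)[(i : ℕ)]'(by
                rw [List.length_splitWrtComposition]; exact i.2)).splitWrtCompositionAux
                e.blocks).map wnorm)) *
              ((((a.splitWrtComposition c)[(i : ℕ)]'(by
                rw [List.length_splitWrtComposition]; exact i.2)).splitWrtCompositionAux
                e.blocks).map P).prod) := by
      intro i
      have hi : (i : ℕ) < (a.splitWrtComposition c).length := by
        rw [List.length_splitWrtComposition]; exact i.2
      have hmem : (a.splitWrtComposition c)[(i : ℕ)] ∈ a.splitWrtComposition c :=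
        List.getElem_mem _
      have hb : (a.splitWrtComposition c)[(i : ℕ)] ≠ [] :=
        List.ne_nil_of_length_pos (List.length_pos_of_mem_splitWrtComposition hmem)
      have hm : ((a.splitWrtComposition c)[(i : ℕ)]).length = c.blocksFun i := by
        have h1 := List.map_length_splitWrtComposition a c
        calc ((a.splitWrtComposition c)[(i : ℕ)]).length
            = ((a.splitWrtComposition c).map List.length)[(i : ℕ)]'(by
                rw [List.length_map]; exact hi) := by rw [List.getElem_map]
          _ = c.blocks[(i : ℕ)]'(by rw [← h1, List.length_map]; exact hi) := by
                congr 1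
          _ = c.blocksFun i := rfl
      exact mouldComp_expand N P _ hb hm
    rw [prod_map_eq_prod_fin (a.splitWrtComposition c) (mouldComp N P)
      (List.length_splitWrtComposition a c)]
    rw [Finset.prod_congr rfl (fun i _ => key i), Fintype.prod_sum]
  calc
    ∑ c : Composition a.length,
        mouldComp M N ((a.splitWrtCompositionAux c.blocks).map wnorm) *
          ((a.splitWrtCompositionAux c.blocks).map P).prod
      = ∑ x : Σ c : Composition a.length, Composition c.length,
          M ((((a.splitWrtComposition x.1).map wnorm).splitWrtCompositionAux
              x.2.blocks).map wnorm) *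
            ((((a.splitWrtComposition x.1).map wnorm).splitWrtCompositionAux
              x.2.blocks).map N).prod *
            ((a.splitWrtComposition x.1).map P).prod := by
        rw [← Finset.univ_sigma_univ, Finset.sum_sigma]
        apply Finset.sum_congr rfl
        intro c _
        rw [show a.splitWrtCompositionAux c.blocks = a.splitWrtComposition c from rfl,
          expandL c, Finset.sum_mul]
    _ = ∑ y : Σ c : Composition a.length, ∀ i : Fin c.length, Composition (c.blocksFun i),
          M ((a.splitWrtComposition y.1).map wnorm) *
            ∏ i : Fin y.1.length,
              (N (((((a.splitWrtComposition y.1)[(i : ℕ)]'(by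
                  rw [List.length_splitWrtComposition]; exact i.2)).splitWrtCompositionAux
                  (y.2 i).blocks).map wnorm)) *
                ((((a.splitWrtComposition y.1)[(i : ℕ)]'(by
                  rw [List.length_splitWrtComposition]; exact i.2)).splitWrtCompositionAux
                  (y.2 i).blocks).map P).prod) := by
        rw [← Equiv.sum_comp (Composition.sigmaEquivSigmaPi a.length)]
        apply Finset.sum_congr rfl
        rintro ⟨c, d⟩ -
        dsimp only [Composition.sigmaEquivSigmaPi, Equiv.coe_fn_mk]
        set S := a.splitWrtComposition c with hSdef
        set T := S.splitWrtCompositionAux d.blocks with hTdef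
        have hlenS : S.length = c.length := List.length_splitWrtComposition a c
        have hmaplenS : S.map List.length = c.blocks := List.map_length_splitWrtComposition a c
        have hflatT : T.flatten = S :=
          List.flatten_splitWrtCompositionAux (by rw [d.blocks_sum, hlenS])
        have hmaplenT : T.map List.length = d.blocks :=
          List.map_length_splitWrtCompositionAux (by rw [d.blocks_sum, hlenS])
        have hTne : ∀ t ∈ T, t ≠ [] := by
          intro t ht
          have : t.length ∈ d.blocks := by
            rw [← hmaplenT]; exact List.mem_map_of_mem ht
          exact List.ne_nil_of_length_pos (d.blocks_pos this)
        have hTelem : ∀ t ∈ T, ∀ u ∈ t, u ≠ [] := by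
          intro t ht u hu
          have : u ∈ S := by rw [← hflatT]; exact List.mem_flatten_of_mem ht hu
          exact List.ne_nil_of_length_pos (List.length_pos_of_mem_splitWrtComposition this)
        have hmapw : (S.map wnorm).splitWrtCompositionAux d.blocks = T.map (List.map wnorm) :=
          map_splitWrtCompositionAux wnorm S d.blocks
        have hgather : a.splitWrtComposition (c.gather d) = T.map List.flatten :=
          split_gather a c d
        have hblocks : c.blocks.splitWrtCompositionAux d.blocks =
            T.map (List.map List.length) := by
          rw [← hmaplenS, map_splitWrtCompositionAux]
        have hTlen : T.length = (c.gather d).length := by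
          rw [Composition.length_gather, hTdef, List.length_splitWrtCompositionAux]
        -- the `M`-arguments agree
        have hM : ((S.map wnorm).splitWrtCompositionAux d.blocks).map wnorm =
            (a.splitWrtComposition (c.gather d)).map wnorm := by
          rw [hmapw, hgather, List.map_map, List.map_map]
          apply List.map_congr_left
          intro t ht
          exact wnorm_flatten t (hTne t ht) (hTelem t ht)
        -- each block on the right splits back to the corresponding entry of `T`
        have hblock : ∀ i : Fin (c.gather d).length,
            ((a.splitWrtComposition (c.gather d))[(i : ℕ)]'(by
                rw [List.length_splitWrtComposition]; exact i.2)).splitWrtCompositionAux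
              (c.sigmaCompositionAux d i).blocks =
            T[(i : ℕ)]'(by rw [hTlen]; exact i.2) := by
          intro i
          have pf2 : (i : ℕ) < T.length := by rw [hTlen]; exact i.2
          have h1 : (a.splitWrtComposition (c.gather d))[(i : ℕ)]'(by
              rw [List.length_splitWrtComposition]; exact i.2) = (T[(i : ℕ)]'pf2).flatten := by
            simp only [hgather, List.getElem_map]
          have h2 : (c.sigmaCompositionAux d i).blocks =
              (T[(i : ℕ)]'pf2).map List.length := by
            show (c.blocks.splitWrtComposition d)[(i : ℕ)]'_ = _
            exact (List.getElem_of_eq hblocks _).trans (List.getElem_map _)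
          rw [h1, h2, splitAux_flatten _ _ rfl]
        -- rewrite the product on the right as a product over the list `T`
        have hprodR : (∏ i : Fin (c.gather d).length,
              (N ((((a.splitWrtComposition (c.gather d))[(i : ℕ)]'(by
                  rw [List.length_splitWrtComposition]; exact i.2)).splitWrtCompositionAux
                  (c.sigmaCompositionAux d i).blocks).map wnorm) *
                ((((a.splitWrtComposition (c.gather d))[(i : ℕ)]'(by
                  rw [List.length_splitWrtComposition]; exact i.2)).splitWrtCompositionAux
                  (c.sigmaCompositionAux d i).blocks).map P).prod)) =
            (T.map (fun t => N (t.map wnorm) * (t.map P).prod)).prod := by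
          rw [prod_map_eq_prod_fin T (fun t => N (t.map wnorm) * (t.map P).prod) hTlen]
          apply Finset.prod_congr rfl
          intro i _
          rw [hblock i]
        show _ = M _ * ∏ i : Fin (c.gather d).length,
              (N ((((a.splitWrtComposition (c.gather d))[(i : ℕ)]'(by
                  rw [List.length_splitWrtComposition]; exact i.2)).splitWrtCompositionAux
                  (c.sigmaCompositionAux d i).blocks).map wnorm) *
                ((((a.splitWrtComposition (c.gather d))[(i : ℕ)]'(by
                  rw [List.length_splitWrtComposition]; exact i.2)).splitWrtCompositionAux
                  (c.sigmaCompositionAux d i).blocks).map P).prod)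
        rw [hprodR, hM]
        rw [List.prod_map_mul]
        rw [hmapw, List.map_map]
        have hP : (S.map P).prod = (T.map (fun t => (t.map P).prod)).prod := by
          conv_lhs => rw [← hflatT]
          rw [List.map_flatten, List.prod_flatten, List.map_map]
          rfl
        rw [hP, mul_assoc]
        rfl
    _ = ∑ c : Composition a.length,
          M ((a.splitWrtCompositionAux c.blocks).map wnorm) *
            ((a.splitWrtCompositionAux c.blocks).map (mouldComp N P)).prod := by
        rw [← Finset.univ_sigma_univ, Finset.sum_sigma]
        apply Finset.sum_congr rfl
        intro c _
        rw [show a.splitWrtCompositionAux c.blocks = a.splitWrtComposition c from rfl,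
          expandR c, Finset.mul_sum]
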